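/- arXiv:1612.08597 — 2 statements merged into one kernel-verified Lean document; each statement's English description precedes it below -/
import Mathlib

section
/- For 0 < |q| < 1 and |z| < 1, the Cauchy product formula holds: e_q(αz) e_q(βz) = ∑_{n=0}^∞ [∑_{k=0}^n qbinom(n,k) (α/β)^k] (βz)^n/(q;q)_n, where qbinom(n,k) = (q;q)_n/((q;q)_k (q;q)_{n-k}) and e_q(z) = ∑_{n=0}^∞ z^n/(q;q)_n. -/
noncomputable def qPoch5 (q a : ℂ) (n : ℕ) : ℂ := ∏ j ∈ Finset.range n, (1 - a * q ^ j)

noncomputable def qBinom5 (q : ℂ) (n k : ℕ) : ℂ := qPoch5 q q n / (qPoch5 q q k * qPoch5 q q (n - k))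

/-! The two series converge absolutely by the ratio test, since
`(q;q)_{n+1} / (q;q)_n = 1 - q^{n+1} → 1`, so their product is the Cauchy product;
its `n`-th coefficient `∑_k (αz)^k (βz)^{n-k} / ((q;q)_k (q;q)_{n-k})` is `(βz)^n / (q;q)_n`
times the `q`-binomial sum. -/

open Filter Topology

lemma qPoch5_succ (q a : ℂ) (n : ℕ) : qPoch5 q a (n + 1) = qPoch5 q a n * (1 - a * q ^ n) :=
  Finset.prod_range_succ _ n

lemma one_sub_mul_pow_ne_zero {q a : ℂ} (hq : ‖q‖ ≤ 1) (ha : ‖a‖ < 1) (n : ℕ) :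
    1 - a * q ^ n ≠ 0 := by
  refine sub_ne_zero.mpr fun h => ?_
  have : ‖a * q ^ n‖ < 1 := by
    rw [norm_mul, norm_pow]
    exact mul_lt_one_of_nonneg_of_lt_one_left (norm_nonneg a) ha (pow_le_one₀ (norm_nonneg q) hq)
  simp [← h] at this

lemma qPoch5_ne_zero {q a : ℂ} (hq : ‖q‖ ≤ 1) (ha : ‖a‖ < 1) (n : ℕ) :
    qPoch5 q a n ≠ 0 :=
  Finset.prod_ne_zero_iff.mpr fun j _ => one_sub_mul_pow_ne_zero hq ha j

lemma summable_norm_pow_div_qPoch5 {q w : ℂ} (hq : ‖q‖ < 1) (hw : ‖w‖ < 1) :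
    Summable fun n => ‖w ^ n / qPoch5 q q n‖ := by
  rcases eq_or_ne w 0 with rfl | hw0
  · refine summable_of_ne_finset_zero (s := {0}) fun n hn => ?_
    simp [zero_pow (Finset.notMem_singleton.mp hn)]
  have hP := qPoch5_ne_zero hq.le hq
  have hfactor := one_sub_mul_pow_ne_zero hq.le hq
  refine summable_of_ratio_test_tendsto_lt_one hw
    (Eventually.of_forall fun n => by simpa using div_ne_zero (pow_ne_zero n hw0) (hP n)) ?_
  have hlim : Tendsto (fun n : ℕ => ‖w‖ / ‖1 - q * q ^ n‖) atTop (𝓝 ‖w‖) := by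
    have hfactor_lim : Tendsto (fun n : ℕ => 1 - q * q ^ n) atTop (𝓝 (1 - q * 0)) :=
      ((tendsto_pow_atTop_nhds_zero_of_norm_lt_one hq).const_mul q).const_sub 1
    simpa [Pi.div_def] using tendsto_const_nhds.div hfactor_lim.norm (by simp)
  refine hlim.congr fun n => ?_
  rw [norm_norm, norm_norm, qPoch5_succ, pow_succ, norm_div, norm_div, norm_mul, norm_mul,
    norm_pow]
  field_simp [hw0, hP n, hfactor n]

lemma mul_pow_mul_mul_pow_sub_eq_div_pow_mul_pow {α β : ℂ} (hβ : β ≠ 0) (z : ℂ) {k n : ℕ}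
    (hkn : k ≤ n) :
    (α * z) ^ k * (β * z) ^ (n - k) = (α / β) ^ k * (β * z) ^ n := by
  obtain ⟨m, rfl⟩ := Nat.exists_eq_add_of_le hkn
  rw [Nat.add_sub_cancel_left, div_pow, pow_add, mul_pow, mul_pow, mul_pow]
  field_simp

lemma qBinom5_mul_div_qPoch5 {q : ℂ} {n : ℕ} (hn : qPoch5 q q n ≠ 0) (k : ℕ) (x : ℂ) :
    qBinom5 q n k * x / qPoch5 q q n = x / (qPoch5 q q k * qPoch5 q q (n - k)) := by
  rw [qBinom5, div_mul_eq_mul_div, div_div, mul_comm _ (qPoch5 q q n), mul_div_mul_left _ _ hn]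

theorem eq_mul_eq_general (q α β z : ℂ) (hq1 : ‖q‖ < 1) (hβ : β ≠ 0)
    (hαz : ‖α * z‖ < 1) (hβz : ‖β * z‖ < 1) :
    (∑' n : ℕ, (α * z) ^ n / qPoch5 q q n) * (∑' n : ℕ, (β * z) ^ n / qPoch5 q q n)
      = ∑' n : ℕ, (∑ k ∈ Finset.range (n + 1), qBinom5 q n k * (α / β) ^ k)
          * (β * z) ^ n / qPoch5 q q n := by
  rw [tsum_mul_tsum_eq_tsum_sum_range_of_summable_norm
    (summable_norm_pow_div_qPoch5 hq1 hαz) (summable_norm_pow_div_qPoch5 hq1 hβz)]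
  refine tsum_congr fun n => ?_
  rw [Finset.sum_mul, Finset.sum_div]
  refine Finset.sum_congr rfl fun k hk => ?_
  rw [div_mul_div_comm,
    mul_pow_mul_mul_pow_sub_eq_div_pow_mul_pow hβ z (Finset.mem_range_succ_iff.mp hk),
    mul_assoc (qBinom5 q n k), qBinom5_mul_div_qPoch5 (qPoch5_ne_zero hq1.le hq1 n)]

/-- `e_q(αz)e_q(βz) = ∑_n [∑_k qbinom(n,k)(α/β)^k] (βz)^n/(q;q)_n`. -/
theorem eq_mul_eq (q α β z : ℂ) (hq0 : 0 < ‖q‖) (hq1 : ‖q‖ < 1) (hβ : β ≠ 0)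
    (hαz : ‖α * z‖ < 1) (hβz : ‖β * z‖ < 1) :
    (∑' n : ℕ, (α * z) ^ n / qPoch5 q q n) * (∑' n : ℕ, (β * z) ^ n / qPoch5 q q n)
      = ∑' n : ℕ, (∑ k ∈ Finset.range (n + 1), qBinom5 q n k * (α / β) ^ k)
          * (β * z) ^ n / qPoch5 q q n :=
  eq_mul_eq_general q α β z hq1 hβ hαz hβz
end

section
/- For 0 < |q| < 1 and |z| < 1, the multiplicative identity for 1φ0 series holds: (∑_{n=0}^∞ ((a;q)_n/(q;q)_n)(bz)^n) · (∑_{n=0}^∞ ((b;q)_n/(q;q)_n) z^n) = ∑_{n=0}^∞ ((ab;q)_n/(q;q)_n) z^n, i.e. 1φ0(a;—;q,bz) · 1φ0(b;—;q,z) = 1φ0(ab;—;q,z). -/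
/-!
Write `φ_c(w)` for `1φ0(c;—;q,w)`. Comparing coefficients gives the functional equation
`(1 - w) φ_c(w) = (1 - c w) φ_c(q w)`, and iterating it,
`(w;q)_n φ_c(w) = (c w;q)_n φ_c(qⁿ w)`.
Applied to the three series of the identity, the nonzero products `(z;q)_n (bz;q)_n` cancel,
leaving `φ_a(bz) φ_b(z) · φ_{ab}(qⁿz) = φ_{ab}(z) · φ_a(qⁿbz) φ_b(qⁿz)` for every `n`.
As `n → ∞`, each series evaluated at `qⁿw` tends to its constant term `1` by dominated
convergence.
-/

noncomputable def qPoch8 (q a : ℂ) (n : ℕ) : ℂ := ∏ j ∈ Finset.range n, (1 - a * q ^ j)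

open Filter Topology

noncomputable def onePhiZeroCoeff (q c : ℂ) (n : ℕ) : ℂ := qPoch8 q c n / qPoch8 q q n

noncomputable def onePhiZero (q c w : ℂ) : ℂ := ∑' n : ℕ, onePhiZeroCoeff q c n * w ^ n

lemma one_sub_ne_zero_of_norm_lt_one {R : Type*} [SeminormedRing R] [NormOneClass R] {x : R}
    (hx : ‖x‖ < 1) : 1 - x ≠ 0 :=
  sub_ne_zero.mpr fun h => by simp [← h] at hx

lemma norm_pow_mul_le {𝕜 : Type*} [NormedDivisionRing 𝕜] {q : 𝕜} (hq : ‖q‖ ≤ 1) (n : ℕ)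
    (w : 𝕜) : ‖q ^ n * w‖ ≤ ‖w‖ := by
  rw [norm_mul, norm_pow]
  exact mul_le_of_le_one_left (norm_nonneg w) (pow_le_one₀ (norm_nonneg q) hq)

lemma qPoch8_succ (q a : ℂ) (n : ℕ) : qPoch8 q a (n + 1) = qPoch8 q a n * (1 - a * q ^ n) :=
  Finset.prod_range_succ _ n

lemma qPoch8_ne_zero {q w : ℂ} (hq : ‖q‖ ≤ 1) (hw : ‖w‖ < 1) (n : ℕ) :
    qPoch8 q w n ≠ 0 :=
  Finset.prod_ne_zero_iff.mpr fun j _ => one_sub_ne_zero_of_norm_lt_one <|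
    mul_comm w (q ^ j) ▸ (norm_pow_mul_le hq j w).trans_lt hw

lemma onePhiZeroCoeff_zero (q c : ℂ) : onePhiZeroCoeff q c 0 = 1 := by
  simp [onePhiZeroCoeff, qPoch8]

lemma onePhiZeroCoeff_succ (q c : ℂ) (n : ℕ) :
    onePhiZeroCoeff q c (n + 1)
      = onePhiZeroCoeff q c n * ((1 - c * q ^ n) / (1 - q ^ (n + 1))) := by
  rw [onePhiZeroCoeff, onePhiZeroCoeff, qPoch8_succ, qPoch8_succ, ← pow_succ',
    mul_div_mul_comm]

lemma onePhiZeroCoeff_succ_mul {q : ℂ} (hq : ‖q‖ < 1) (c : ℂ) (n : ℕ) :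
    onePhiZeroCoeff q c (n + 1) * (1 - q ^ (n + 1))
      = onePhiZeroCoeff q c n * (1 - c * q ^ n) := by
  have hne : 1 - q ^ (n + 1) ≠ 0 := one_sub_ne_zero_of_norm_lt_one <| by
    rw [pow_succ]
    exact (norm_pow_mul_le hq.le n q).trans_lt hq
  rw [onePhiZeroCoeff_succ, mul_assoc, div_mul_cancel₀ _ hne]

lemma summable_norm_of_succ_eq_mul {R : Type*} [SeminormedRing R] {f ρ : ℕ → R} {l : ℝ}
    (hl : l < 1) (hf : ∀ n, f (n + 1) = ρ n * f n) (hρ : Tendsto (fun n => ‖ρ n‖) atTop (𝓝 l)) :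
    Summable fun n => ‖f n‖ := by
  obtain ⟨r, hlr, hr⟩ := exists_between hl
  refine summable_of_ratio_norm_eventually_le hr ?_
  filter_upwards [hρ.eventually (eventually_le_nhds hlr)] with n hn
  rw [norm_norm, norm_norm, hf]
  exact (norm_mul_le _ _).trans (mul_le_mul_of_nonneg_right hn (norm_nonneg _))

lemma summable_norm_onePhiZero {q w : ℂ} (hq : ‖q‖ < 1) (hw : ‖w‖ < 1) (c : ℂ) :
    Summable fun n => ‖onePhiZeroCoeff q c n * w ^ n‖ := by
  refine summable_norm_of_succ_eq_mul hw (ρ := fun n => (1 - c * q ^ n) / (1 - q * q ^ n) * w)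
    (fun n => by rw [onePhiZeroCoeff_succ, pow_succ', pow_succ]; ring) ?_
  have hpow := tendsto_pow_atTop_nhds_zero_of_norm_lt_one hq
  have hρ : Tendsto (fun n => (1 - c * q ^ n) / (1 - q * q ^ n) * w) atTop
      (𝓝 ((1 - c * 0) / (1 - q * 0) * w)) :=
    ((tendsto_const_nhds.sub (hpow.const_mul c)).div
      (tendsto_const_nhds.sub (hpow.const_mul q)) (by simp)).mul_const w
  simpa using hρ.norm

lemma one_sub_mul_onePhiZero {q w : ℂ} (hq : ‖q‖ < 1) (hw : ‖w‖ < 1) (c : ℂ) :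
    (1 - w) * onePhiZero q c w = (1 - c * w) * onePhiZero q c (q * w) := by
  have hqw : ‖q * w‖ < 1 := by
    simpa only [pow_one] using (norm_pow_mul_le hq.le 1 w).trans_lt hw
  set t := fun n => onePhiZeroCoeff q c n * w ^ n
  set s := fun n => onePhiZeroCoeff q c n * (q * w) ^ n
  have ht : Summable t := (summable_norm_onePhiZero hq hw c).of_norm
  have hs : Summable s := (summable_norm_onePhiZero hq hqw c).of_norm
  have key : ∑' n, (t n - s n) = ∑' n, (w * t n - c * w * s n) := by
    rw [(ht.sub hs).tsum_eq_zero_add]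
    simp only [t, s, pow_zero, sub_self, zero_add]
    refine tsum_congr fun n => ?_
    linear_combination w ^ (n + 1) * onePhiZeroCoeff_succ_mul hq c n
  rw [ht.tsum_sub hs, (ht.mul_left w).tsum_sub (hs.mul_left (c * w)), tsum_mul_left,
    tsum_mul_left] at key
  unfold onePhiZero
  linear_combination key

lemma qPoch8_mul_onePhiZero {q w : ℂ} (hq : ‖q‖ < 1) (hw : ‖w‖ < 1) (c : ℂ) (n : ℕ) :
    qPoch8 q w n * onePhiZero q c w = qPoch8 q (c * w) n * onePhiZero q c (q ^ n * w) := by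
  induction n with
  | zero => simp [qPoch8]
  | succ n ih =>
    have step := one_sub_mul_onePhiZero hq ((norm_pow_mul_le hq.le n w).trans_lt hw) c
    rw [show q * (q ^ n * w) = q ^ (n + 1) * w by ring] at step
    rw [qPoch8_succ, qPoch8_succ]
    linear_combination (1 - w * q ^ n) * ih + qPoch8 q (c * w) n * step

lemma tendsto_onePhiZero_pow_mul {q w : ℂ} (hq : ‖q‖ < 1) (hw : ‖w‖ < 1) (c : ℂ) :
    Tendsto (fun n : ℕ => onePhiZero q c (q ^ n * w)) atTop (𝓝 1) := by
  have hlim : ∀ k, Tendsto (fun n : ℕ => onePhiZeroCoeff q c k * (q ^ n * w) ^ k) atTop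
      (𝓝 (onePhiZeroCoeff q c k * (0 * w) ^ k)) := fun k =>
    (((tendsto_pow_atTop_nhds_zero_of_norm_lt_one hq).mul_const w).pow k).const_mul _
  have hbound : ∀ n k,
      ‖onePhiZeroCoeff q c k * (q ^ n * w) ^ k‖ ≤ ‖onePhiZeroCoeff q c k * w ^ k‖ := by
    intro n k
    simp only [norm_mul, norm_pow]
    gcongr
    simpa only [norm_mul, norm_pow] using norm_pow_mul_le hq.le n w
  have := tendsto_tsum_of_dominated_convergence (summable_norm_onePhiZero hq hw c) hlim
    (Eventually.of_forall hbound)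
  rwa [tsum_eq_single 0 fun k hk => by simp [hk], pow_zero, mul_one,
    onePhiZeroCoeff_zero] at this

lemma onePhiZero_mul_cross {q a b z : ℂ} (hq : ‖q‖ < 1) (hz : ‖z‖ < 1) (hbz : ‖b * z‖ < 1)
    (n : ℕ) :
    onePhiZero q a (b * z) * onePhiZero q b z * onePhiZero q (a * b) (q ^ n * z)
      = onePhiZero q (a * b) z
        * (onePhiZero q a (q ^ n * (b * z)) * onePhiZero q b (q ^ n * z)) := by
  have hA := qPoch8_mul_onePhiZero hq hbz a n
  have hB := qPoch8_mul_onePhiZero hq hz b n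
  have hAB := qPoch8_mul_onePhiZero hq hz (a * b) n
  rw [← mul_assoc a b z] at hA
  refine mul_left_cancel₀
    (mul_ne_zero (qPoch8_ne_zero hq.le hz n) (qPoch8_ne_zero hq.le hbz n)) ?_
  linear_combination
    qPoch8 q z n * onePhiZero q b z * onePhiZero q (a * b) (q ^ n * z) * hA
    + qPoch8 q (a * b * z) n * onePhiZero q a (q ^ n * (b * z))
      * onePhiZero q (a * b) (q ^ n * z) * hB
    - qPoch8 q (b * z) n * onePhiZero q a (q ^ n * (b * z))
      * onePhiZero q b (q ^ n * z) * hAB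

theorem onePhiZero_mul_general (q a b z : ℂ) (hq1 : ‖q‖ < 1)
    (hz : ‖z‖ < 1) (hbz : ‖b * z‖ < 1) :
    (∑' n : ℕ, qPoch8 q a n / qPoch8 q q n * (b * z) ^ n)
      * (∑' n : ℕ, qPoch8 q b n / qPoch8 q q n * z ^ n)
      = ∑' n : ℕ, qPoch8 q (a * b) n / qPoch8 q q n * z ^ n := by
  change onePhiZero q a (b * z) * onePhiZero q b z = onePhiZero q (a * b) z
  have hlimL := (tendsto_onePhiZero_pow_mul hq1 hz (a * b)).const_mul
    (onePhiZero q a (b * z) * onePhiZero q b z)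
  have hlimR := ((tendsto_onePhiZero_pow_mul hq1 hbz a).mul
    (tendsto_onePhiZero_pow_mul hq1 hz b)).const_mul (onePhiZero q (a * b) z)
  simp only [onePhiZero_mul_cross hq1 hz hbz, mul_one] at hlimL hlimR
  exact tendsto_nhds_unique hlimL hlimR

/-- `1φ0(a;—;q,bz) · 1φ0(b;—;q,z) = 1φ0(ab;—;q,z)`. -/
theorem onePhiZero_mul (q a b z : ℂ) (hq0 : 0 < ‖q‖) (hq1 : ‖q‖ < 1)
    (hz : ‖z‖ < 1) (hbz : ‖b * z‖ < 1) :
    (∑' n : ℕ, qPoch8 q a n / qPoch8 q q n * (b * z) ^ n)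
      * (∑' n : ℕ, qPoch8 q b n / qPoch8 q q n * z ^ n)
      = ∑' n : ℕ, qPoch8 q (a * b) n / qPoch8 q q n * z ^ n :=
  onePhiZero_mul_general q a b z hq1 hz hbz
end
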